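/- For any convex body K in ℝ^d, the translational packing density satisfies δ_T(K) ≤ Vol(K)/Vol(DK), where DK = (1/2)(K - K) is the difference body. -/

import Mathlib

open MeasureTheory Filter Pointwise
open scoped ENNReal

/-- The translational packing density of a body `K ⊆ ℝ^d`: the supremum, over all
countable packings by translates of `K` (pairwise disjoint interiors), of the upper
density `limsup_{r→∞} (Σᵢ Vol((vᵢ +ᵥ K) ∩ B(0,r))) / Vol(B(0,r))`. -/
noncomputable def transPackingDensity {d : ℕ} (K : Set (EuclideanSpace ℝ (Fin d))) : ℝ≥0∞ :=
  ⨆ (v : ℕ → EuclideanSpace ℝ (Fin d))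
    (_ : ∀ i j, i ≠ j → Disjoint (interior (v i +ᵥ K)) (interior (v j +ᵥ K))),
    limsup (fun r : ℝ =>
      (∑' i, volume ((v i +ᵥ K) ∩ Metric.closedBall 0 r)) /
        volume (Metric.closedBall (0 : EuclideanSpace ℝ (Fin d)) r)) atTop

/-!
If the translates `vᵢ + K` have disjoint interiors, no difference `vᵢ - vⱼ` lies in
`int K - int K`. For convex `K` this set contains `int (K - K)`, and `DK - DK = K - K`, so no
`vᵢ - vⱼ` lies in `int DK - int DK` either: the translates `vᵢ + DK` also have disjoint interiors,
and inside any ball their volumes add up to at most the volume of the ball. If `K` and `DK` lie in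
`B(0, R)`, every `vᵢ + K` meeting `B(0, r)` has its companion `vᵢ + DK` inside `B(0, r + 2R)`, so
`Σᵢ vol ((vᵢ + K) ∩ B(0, r)) ≤ (vol K / vol DK) · vol B(0, r + 2R)`, and
`vol B(0, r + 2R) / vol B(0, r) → 1`.
-/

open Set Metric Module
open scoped Topology

section TopologicalAddGroup

variable {G : Type*} [AddCommGroup G] [TopologicalSpace G] [IsTopologicalAddGroup G]

theorem closure_sub_closure_subset (s t : Set G) : closure s - closure t ⊆ closure (s - t) := by
  rintro _ ⟨x, hx, y, hy, rfl⟩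
  exact map_mem_closure₂ continuous_sub hx hy fun a ha b hb => sub_mem_sub ha hb

theorem disjoint_interior_vadd_iff {s : Set G} {v w : G} :
    Disjoint (interior (v +ᵥ s)) (interior (w +ᵥ s)) ↔ v - w ∉ interior s - interior s := by
  rw [interior_vadd, interior_vadd, ← not_iff_not, not_disjoint_iff, not_not]
  constructor
  · rintro ⟨_, ⟨x, hx, rfl⟩, y, hy, hyx⟩
    simp only [vadd_eq_add] at hyx
    exact ⟨y, hy, x, hx, by rw [sub_eq_sub_iff_add_eq_add, add_comm y, hyx]⟩
  · rintro ⟨y, hy, x, hx, hyx⟩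
    refine ⟨v + x, vadd_mem_vadd_set hx, y, hy, ?_⟩
    change w + y = v + x
    rw [add_comm w]
    exact sub_eq_sub_iff_add_eq_add.1 hyx

end TopologicalAddGroup

section TopologicalVectorSpace

variable {𝕜 E : Type*} [Field 𝕜] [LinearOrder 𝕜] [IsStrictOrderedRing 𝕜] [TopologicalSpace 𝕜]
  [OrderTopology 𝕜] [AddCommGroup E] [Module 𝕜 E] [TopologicalSpace E]
  [IsTopologicalAddGroup E] [ContinuousSMul 𝕜 E]

theorem Convex.interior_sub_subset {A B : Set E} (hA : Convex 𝕜 A) (hB : Convex 𝕜 B)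
    (hA₀ : (interior A).Nonempty) (hB₀ : (interior B).Nonempty) :
    interior (A - B) ⊆ interior A - interior B := by
  have hopen : IsOpen (interior A - interior B) := isOpen_interior.sub_right
  have hconv : Convex 𝕜 (interior A - interior B) := hA.interior.sub hB.interior
  have hdense : A - B ⊆ closure (interior A - interior B) :=
    calc A - B ⊆ closure (interior A) - closure (interior B) := by
          rw [hA.closure_interior_eq_closure_of_nonempty_interior hA₀,
            hB.closure_interior_eq_closure_of_nonempty_interior hB₀]
          exact sub_subset_sub subset_closure subset_closure
      _ ⊆ closure (interior A - interior B) := closure_sub_closure_subset _ _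
  calc interior (A - B) ⊆ interior (closure (interior A - interior B)) := interior_mono hdense
    _ = interior A - interior B := by
      rw [hconv.interior_closure_eq_interior_of_nonempty_interior
        (by rw [hopen.interior_eq]; exact hA₀.sub hB₀), hopen.interior_eq]

end TopologicalVectorSpace

section DifferenceBody

variable {E : Type*} [AddCommGroup E] [Module ℝ E]

def differenceBody (K : Set E) : Set E := (2⁻¹ : ℝ) • (K - K)

theorem convex_differenceBody {K : Set E} (hK : Convex ℝ K) : Convex ℝ (differenceBody K) :=
  (hK.sub hK).smul _

theorem neg_differenceBody (K : Set E) : -differenceBody K = differenceBody K := by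
  rw [differenceBody, ← smul_set_neg, neg_sub]

theorem Convex.differenceBody_sub_differenceBody {K : Set E} (hK : Convex ℝ K) :
    differenceBody K - differenceBody K = K - K := by
  rw [sub_eq_add_neg (differenceBody K), neg_differenceBody, differenceBody,
    ← (hK.sub hK).add_smul (by norm_num) (by norm_num)]
  norm_num

variable [TopologicalSpace E] [IsTopologicalAddGroup E] [ContinuousSMul ℝ E]

theorem IsCompact.differenceBody {K : Set E} (hK : IsCompact K) : IsCompact (differenceBody K) := by
  show IsCompact ((2⁻¹ : ℝ) • (K - K))
  rw [sub_eq_add_neg]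
  exact (hK.add hK.neg).smul _

theorem interior_differenceBody_nonempty {K : Set E} (hK : (interior K).Nonempty) :
    (interior (differenceBody K)).Nonempty := by
  rw [differenceBody, interior_smul₀ (by norm_num)]
  exact ((hK.sub (hK.mono interior_subset)).mono subset_interior_sub_left).smul_set

theorem Convex.interior_differenceBody_sub_subset {K : Set E} (hK : Convex ℝ K)
    (hK₀ : (interior K).Nonempty) :
    interior (differenceBody K) - interior (differenceBody K) ⊆ interior K - interior K :=
  calc interior (differenceBody K) - interior (differenceBody K)
      ⊆ interior (K - K) := by
        refine interior_maximal ?_ isOpen_interior.sub_right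
        rw [← hK.differenceBody_sub_differenceBody]
        exact sub_subset_sub interior_subset interior_subset
    _ ⊆ interior K - interior K := hK.interior_sub_subset hK hK₀ hK₀

theorem Convex.disjoint_interior_vadd_differenceBody {K : Set E} (hK : Convex ℝ K)
    (hK₀ : (interior K).Nonempty) {v w : E}
    (h : Disjoint (interior (v +ᵥ K)) (interior (w +ᵥ K))) :
    Disjoint (interior (v +ᵥ differenceBody K)) (interior (w +ᵥ differenceBody K)) := by
  rw [disjoint_interior_vadd_iff] at h ⊢
  exact fun hvw => h (hK.interior_differenceBody_sub_subset hK₀ hvw)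

end DifferenceBody

theorem vadd_subset_closedBall_of_inter_nonempty {E : Type*} [SeminormedAddCommGroup E]
    {K L : Set E} {R r : ℝ}
    (hK : K ⊆ closedBall 0 R) (hL : L ⊆ closedBall 0 R) {v : E}
    (h : ((v +ᵥ K) ∩ closedBall 0 r).Nonempty) : v +ᵥ L ⊆ closedBall 0 (r + 2 * R) := by
  obtain ⟨_, ⟨k, hk, rfl⟩, hkr⟩ := h
  rintro _ ⟨l, hl, rfl⟩
  rw [mem_closedBall_zero_iff] at hkr ⊢
  have hk' := mem_closedBall_zero_iff.1 (hK hk)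
  have hl' := mem_closedBall_zero_iff.1 (hL hl)
  simp only [vadd_eq_add] at hkr ⊢
  calc ‖v + l‖ = ‖(v + k) - k + l‖ := by rw [add_sub_cancel_right]
    _ ≤ ‖v + k‖ + ‖k‖ + ‖l‖ := (norm_add_le _ _).trans (by gcongr; exact norm_sub_le _ _)
    _ ≤ r + 2 * R := by linarith

section Measure

variable {E : Type*} [NormedAddCommGroup E] [MeasurableSpace E]

theorem measure_vadd_inter_closedBall_le (μ : Measure E) [μ.IsAddLeftInvariant]
    [MeasurableAdd E] {K L : Set E} {R r : ℝ}
    (hK : K ⊆ closedBall 0 R) (hL : L ⊆ closedBall 0 R) (hL₀ : μ L ≠ 0) (hL_top : μ L ≠ ∞)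
    (v : E) :
    μ ((v +ᵥ K) ∩ closedBall 0 r) ≤ μ K / μ L * μ ((v +ᵥ L) ∩ closedBall 0 (r + 2 * R)) := by
  rcases eq_empty_or_nonempty ((v +ᵥ K) ∩ closedBall 0 r) with h | h
  · simp [h]
  rw [inter_eq_left.2 (vadd_subset_closedBall_of_inter_nonempty hK hL h), measure_vadd,
    ENNReal.div_mul_cancel hL₀ hL_top, ← measure_vadd μ v K]
  exact measure_mono inter_subset_left

variable [NormedSpace ℝ E] [BorelSpace E] [FiniteDimensional ℝ E]
  (μ : Measure E) [μ.IsAddHaarMeasure]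

theorem Convex.tsum_addHaar_inter_le {ι : Type*} {s : ι → Set E} (hs : ∀ i, Convex ℝ (s i))
    (hdisj : Pairwise fun i j => Disjoint (interior (s i)) (interior (s j)))
    {t : Set E} (ht : MeasurableSet t) :
    ∑' i, μ (s i ∩ t) ≤ μ t :=
  calc ∑' i, μ (s i ∩ t) = ∑' i, μ (interior (s i) ∩ t) := tsum_congr fun i =>
        measure_congr ((interior_ae_eq_of_null_frontier ((hs i).addHaar_frontier μ)).inter
          (ae_eq_refl t)).symm
    _ ≤ μ (⋃ i, interior (s i) ∩ t) := tsum_meas_le_meas_iUnion_of_disjoint μ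
        (fun _ => isOpen_interior.measurableSet.inter ht)
        (fun _ _ hij => (hdisj hij).mono inter_subset_left inter_subset_left)
    _ ≤ μ t := measure_mono (iUnion_subset fun _ => inter_subset_right)

theorem tendsto_addHaar_closedBall_add_div_addHaar_closedBall (x : E) (a : ℝ) :
    Tendsto (fun r => μ (closedBall x (r + a)) / μ (closedBall x r)) atTop (𝓝 1) := by
  have hratio : Tendsto (fun r : ℝ => (r + a) / r) atTop (𝓝 1) := by
    have : Tendsto (fun r : ℝ => 1 + a * r⁻¹) atTop (𝓝 1) := by
      simpa using (tendsto_inv_atTop_zero.const_mul a).const_add 1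
    refine this.congr' ?_
    filter_upwards [eventually_ne_atTop 0] with r hr
    field_simp
  have := ENNReal.tendsto_ofReal (hratio.pow (finrank ℝ E))
  rw [one_pow, ENNReal.ofReal_one] at this
  refine this.congr' ?_
  filter_upwards [eventually_gt_atTop 0, eventually_ge_atTop (-a)] with r hr hra
  rw [Measure.addHaar_closedBall μ x (by linarith), Measure.addHaar_closedBall μ x hr.le,
    ENNReal.mul_div_mul_right _ _ (measure_ball_pos μ 0 one_pos).ne' measure_ball_lt_top.ne,
    ← ENNReal.ofReal_div_of_pos (by positivity), div_pow]

theorem Convex.tsum_addHaar_vadd_inter_closedBall_le {K : Set E} (hK : Convex ℝ K)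
    (hK₀ : (interior K).Nonempty) {R : ℝ} (hR : K ∪ differenceBody K ⊆ closedBall 0 R)
    {ι : Type*} {v : ι → E}
    (hv : Pairwise fun i j => Disjoint (interior (v i +ᵥ K)) (interior (v j +ᵥ K))) (r : ℝ) :
    ∑' i, μ ((v i +ᵥ K) ∩ closedBall 0 r) ≤
      μ K / μ (differenceBody K) * μ (closedBall 0 (r + 2 * R)) := by
  have hDK₀ : μ (differenceBody K) ≠ 0 :=
    ((isOpen_interior.measure_pos μ (interior_differenceBody_nonempty hK₀)).trans_le
      (measure_mono interior_subset)).ne'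
  have hDK_top : μ (differenceBody K) ≠ ∞ :=
    (measure_mono (subset_union_right.trans hR)).trans_lt measure_closedBall_lt_top |>.ne
  set c := μ K / μ (differenceBody K)
  calc ∑' i, μ ((v i +ᵥ K) ∩ closedBall 0 r)
      ≤ ∑' i, c * μ ((v i +ᵥ differenceBody K) ∩ closedBall 0 (r + 2 * R)) :=
        ENNReal.tsum_le_tsum fun i => measure_vadd_inter_closedBall_le μ
          (subset_union_left.trans hR) (subset_union_right.trans hR) hDK₀ hDK_top (v i)
    _ = c * ∑' i, μ ((v i +ᵥ differenceBody K) ∩ closedBall 0 (r + 2 * R)) :=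
        ENNReal.tsum_mul_left
    _ ≤ c * μ (closedBall 0 (r + 2 * R)) := by
        gcongr
        exact Convex.tsum_addHaar_inter_le μ (fun i => (convex_differenceBody hK).vadd (v i))
          (fun i j hij => hK.disjoint_interior_vadd_differenceBody hK₀ (hv hij))
          measurableSet_closedBall

end Measure

/-- For any convex body `K` in `ℝ^d`, the translational packing density satisfies
`δ_T(K) ≤ Vol(K)/Vol(DK)`, where `DK = (1/2) • (K - K)` is the difference body. -/
theorem transPackingDensity_le_volume_ratio (d : ℕ)
    (K : Set (EuclideanSpace ℝ (Fin d)))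
    (hKcompact : IsCompact K) (hKconv : Convex ℝ K)
    (hKint : (interior K).Nonempty) :
    transPackingDensity K ≤ volume K / volume ((2⁻¹ : ℝ) • (K - K)) := by
  change _ ≤ volume K / volume (differenceBody K)
  obtain ⟨R, hR⟩ := (hKcompact.union hKcompact.differenceBody).isBounded.subset_closedBall 0
  refine iSup₂_le fun v hv => ?_
  calc limsup _ atTop
      ≤ limsup (fun r => volume K / volume (differenceBody K) *
          (volume (closedBall (0 : EuclideanSpace ℝ (Fin d)) (r + 2 * R)) /
            volume (closedBall (0 : EuclideanSpace ℝ (Fin d)) r))) atTop :=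
        limsup_le_limsup <| Eventually.of_forall fun r =>
          (ENNReal.div_le_div_right
            (hKconv.tsum_addHaar_vadd_inter_closedBall_le volume hKint hR hv r) _).trans_eq
            (mul_div_assoc _ _ _)
    _ = volume K / volume (differenceBody K) := by
        simpa using (ENNReal.Tendsto.const_mul
          (tendsto_addHaar_closedBall_add_div_addHaar_closedBall volume 0 (2 * R))
          (Or.inl one_ne_zero)).limsup_eq
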